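/- arXiv:2404.19490 — 3 statements merged into one kernel-verified Lean document; each statement's English description precedes it below -/
import Mathlib

section
/- With A and f as above (A the N×N matrix with constant rows (a₁,…,a_N), ‖A‖ = ∑ a_j ≠ 0, and f(y) = ∑_{n≥0} y^n/(n!)²), for every c ∈ ℝ the matrix power series f(c((1/N)A − I_N)) converges and equals f(−c)(I_N − (1/‖A‖)A) + f(c((1/N)‖A‖ − 1))·(1/‖A‖)A. -/
theorem constant_row_matrix_bessel_series
    (N : ℕ) (hN : 1 ≤ N) (a : Fin N → ℝ)
    (A : Matrix (Fin N) (Fin N) ℝ) (hA : ∀ i j, A i j = a j)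
    (normA : ℝ) (hnorm : normA = ∑ j, a j) (hne : normA ≠ 0)
    (f : ℝ → ℝ) (hf : ∀ y : ℝ, HasSum (fun n : ℕ => y ^ n / ((Nat.factorial n : ℝ))^2) (f y))
    (c : ℝ) :
    HasSum
      (fun n : ℕ => (1 / ((Nat.factorial n : ℝ))^2) • (c • ((1 / (N : ℝ)) • A - 1)) ^ n)
      (f (-c) • ((1 : Matrix (Fin N) (Fin N) ℝ) - (1 / normA) • A)
        + f (c * ((1 / (N : ℝ)) * normA - 1)) • ((1 / normA) • A)) := by
  set t : ℝ := c * ((1 / (N : ℝ)) * normA - 1) with ht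
  set P : Matrix (Fin N) (Fin N) ℝ := (1 / normA) • A with hP
  have hAA : A * A = normA • A := by
    ext i j
    simp [Matrix.mul_apply, hA, hnorm, ← Finset.sum_mul]
  have hPP : P * P = P := by
    rw [hP, Matrix.smul_mul, Matrix.mul_smul, hAA, smul_smul, smul_smul]
    congr 1
    field_simp
  have hM : c • ((1 / (N : ℝ)) • A - 1) = (-c) • (1 - P) + t • P := by
    ext i j
    simp only [hP, ht, Matrix.smul_apply, Matrix.sub_apply, Matrix.add_apply,
      Matrix.one_apply, hA, smul_eq_mul]
    split <;> field_simp <;> ring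
  have h0 : P * (1 - P) = 0 := by rw [mul_sub, mul_one, hPP, sub_self]
  have h0' : (1 - P) * P = 0 := by rw [sub_mul, one_mul, hPP, sub_self]
  have h1 : (1 - P) * (1 - P) = 1 - P := by rw [mul_sub, mul_one, h0', sub_zero]
  have hpow : ∀ n : ℕ, (c • ((1 / (N : ℝ)) • A - 1)) ^ n
      = ((-c) ^ n) • (1 - P) + (t ^ n) • P := by
    intro n
    induction n with
    | zero => simp
    | succ n ih =>
      rw [pow_succ, ih, hM, pow_succ, pow_succ]
      simp only [add_mul, mul_add, smul_mul_smul_comm, h0, h0', h1, hPP, smul_zero,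
        add_zero, zero_add]
  have hfun : (fun n : ℕ => (1 / ((Nat.factorial n : ℝ))^2) • (c • ((1 / (N : ℝ)) • A - 1)) ^ n)
      = fun n : ℕ => ((-c) ^ n / ((Nat.factorial n : ℝ))^2) • (1 - P)
        + (t ^ n / ((Nat.factorial n : ℝ))^2) • P := by
    funext n
    rw [hpow n, smul_add, smul_smul, smul_smul, one_div_mul_eq_div, one_div_mul_eq_div]
  rw [hfun]
  exact ((hf (-c)).smul_const (1 - P)).add ((hf t).smul_const P)
end

section
/- (Fokker–Planck equation for the Brownian sheet density.) Let g(t,x,y) = (2πtx)^{−1/2} exp(−(y−y₀)²/(2tx)) for t,x > 0, y ∈ ℝ. Then g satisfies the fourth-order PDE ∂²g/∂t∂x = (1/2)·∂²g/∂y² + (tx/4)·∂⁴g/∂y⁴. -/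
/-!
For fixed `t, x`, `g t x` is the heat kernel `φ s` at variance `s = t * x`. The heat kernel
solves the heat equation `∂ₛφ = ½ ∂²_y φ`, and so does `∂²_y φ` (both are checked on the
explicit Hermite-type formulas for the `y`-derivatives), whence `∂²ₛφ = ¼ ∂⁴_y φ`. By the
chain rule `∂ₓ∂ₜ (φ (t * x)) = ∂ₛφ + t x ∂²ₛφ`.
-/

open Real Filter Topology

noncomputable def heatKernel (y₀ s y : ℝ) : ℝ :=
  (2 * π * s) ^ (-(1 : ℝ) / 2) * exp (-(y - y₀) ^ 2 / (2 * s))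

namespace heatKernel

variable {y₀ s : ℝ}

theorem hasDerivAt_mul {p : ℝ → ℝ} {p' y : ℝ} (hp : HasDerivAt p p' y) :
    HasDerivAt (fun z => p z * heatKernel y₀ s z)
      ((p' - p y * (y - y₀) / s) * heatKernel y₀ s y) y := by
  have hexp : HasDerivAt (fun z => -(z - y₀) ^ 2 / (2 * s)) (-(2 * (y - y₀)) / (2 * s)) y := by
    simpa using (((hasDerivAt_id' y).sub_const y₀).pow 2).neg.div_const (2 * s)
  refine (hp.fun_mul (hexp.exp.const_mul ((2 * π * s) ^ (-(1 : ℝ) / 2)))).congr_deriv ?_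
  rw [heatKernel]
  ring

theorem deriv_mul {p p' : ℝ → ℝ} (hp : ∀ z, HasDerivAt p (p' z) z) :
    deriv (fun z => p z * heatKernel y₀ s z)
      = fun z => (p' z - p z * (z - y₀) / s) * heatKernel y₀ s z :=
  funext fun z => (hasDerivAt_mul (hp z)).deriv

theorem iteratedDeriv_one :
    iteratedDeriv 1 (heatKernel y₀ s) = fun y => -(y - y₀) / s * heatKernel y₀ s y := by
  funext y
  have h := (hasDerivAt_mul (y₀ := y₀) (s := s) (hasDerivAt_const y (1 : ℝ))).deriv
  simp only [one_mul] at h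
  rw [_root_.iteratedDeriv_one, h]
  ring

theorem iteratedDeriv_two (hs : s ≠ 0) :
    iteratedDeriv 2 (heatKernel y₀ s)
      = fun y => ((y - y₀) ^ 2 - s) / s ^ 2 * heatKernel y₀ s y := by
  rw [iteratedDeriv_succ, iteratedDeriv_one,
    deriv_mul (p := fun z => -(z - y₀) / s)
      fun z => ((hasDerivAt_id' z).sub_const y₀).neg.div_const s]
  funext y
  field_simp
  ring

theorem iteratedDeriv_three (hs : s ≠ 0) :
    iteratedDeriv 3 (heatKernel y₀ s)
      = fun y => (3 * s * (y - y₀) - (y - y₀) ^ 3) / s ^ 3 * heatKernel y₀ s y := by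
  rw [iteratedDeriv_succ, iteratedDeriv_two hs,
    deriv_mul (p := fun z => ((z - y₀) ^ 2 - s) / s ^ 2)
      fun z => ((((hasDerivAt_id' z).sub_const y₀).pow 2).sub_const s).div_const (s ^ 2)]
  funext y
  field_simp
  ring

theorem iteratedDeriv_four (hs : s ≠ 0) :
    iteratedDeriv 4 (heatKernel y₀ s)
      = fun y => ((y - y₀) ^ 4 - 6 * s * (y - y₀) ^ 2 + 3 * s ^ 2) / s ^ 4 * heatKernel y₀ s y := by
  rw [iteratedDeriv_succ, iteratedDeriv_three hs,
    deriv_mul (p := fun z => (3 * s * (z - y₀) - (z - y₀) ^ 3) / s ^ 3)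
      fun z => (((((hasDerivAt_id' z).sub_const y₀).const_mul (3 * s)).sub
      (((hasDerivAt_id' z).sub_const y₀).pow 3)).div_const (s ^ 3))]
  funext y
  field_simp
  ring

theorem hasDerivAt_mul_variance {q : ℝ → ℝ} {q' y : ℝ} (hs : 0 < s) (hq : HasDerivAt q q' s) :
    HasDerivAt (fun r => q r * heatKernel y₀ r y)
      ((q' + q s * ((y - y₀) ^ 2 - s) / (2 * s ^ 2)) * heatKernel y₀ s y) s := by
  have hbase : 0 < 2 * π * s := by positivity
  have hpow : HasDerivAt (fun r => (2 * π * r) ^ (-(1 : ℝ) / 2))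
      (-(1 : ℝ) / 2 * (2 * π * s) ^ (-(1 : ℝ) / 2 - 1) * (2 * π)) s :=
    (hasDerivAt_rpow_const (Or.inl hbase.ne')).comp s (hasDerivAt_const_mul (2 * π))
  have hexp : HasDerivAt (fun r => -(y - y₀) ^ 2 / (2 * r))
      ((0 * (2 * s) - -(y - y₀) ^ 2 * 2) / (2 * s) ^ 2) s :=
    (hasDerivAt_const s _).div (hasDerivAt_const_mul 2) (by positivity)
  refine (hq.fun_mul (hpow.fun_mul hexp.exp)).congr_deriv ?_
  rw [heatKernel, rpow_sub hbase, rpow_one]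
  field_simp
  ring

theorem hasDerivAt_variance {y : ℝ} (hs : 0 < s) :
    HasDerivAt (fun r => heatKernel y₀ r y) (iteratedDeriv 2 (heatKernel y₀ s) y / 2) s := by
  have h := hasDerivAt_mul_variance (y₀ := y₀) (y := y) hs (hasDerivAt_const s (1 : ℝ))
  simp only [one_mul] at h
  refine h.congr_deriv ?_
  rw [iteratedDeriv_two hs.ne']
  field_simp
  ring

theorem hasDerivAt_iteratedDeriv_two_variance {y : ℝ} (hs : 0 < s) :
    HasDerivAt (fun r => iteratedDeriv 2 (heatKernel y₀ r) y)
      (iteratedDeriv 4 (heatKernel y₀ s) y / 2) s := by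
  have hq := ((hasDerivAt_const s ((y - y₀) ^ 2)).fun_sub (hasDerivAt_id' s)).fun_div
    (hasDerivAt_pow 2 s) (pow_ne_zero 2 hs.ne')
  have hD2 : (fun r => iteratedDeriv 2 (heatKernel y₀ r) y)
      =ᶠ[𝓝 s] fun r => ((y - y₀) ^ 2 - r) / r ^ 2 * heatKernel y₀ r y := by
    filter_upwards [eventually_gt_nhds hs] with r hr
    rw [iteratedDeriv_two hr.ne']
  refine ((hasDerivAt_mul_variance hs hq).congr_of_eventuallyEq hD2).congr_deriv ?_
  rw [iteratedDeriv_four hs.ne']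
  field_simp
  ring

end heatKernel

theorem deriv_deriv_comp_mul {f a : ℝ → ℝ} {t x b : ℝ}
    (hf : ∀ᶠ r in 𝓝 (t * x), HasDerivAt f (a r) r) (ha : HasDerivAt a b (t * x)) :
    deriv (fun x' => deriv (fun t' => f (t' * x')) t) x = a (t * x) + t * x * b := by
  have hinner :
      (fun x' => deriv (fun t' => f (t' * x')) t) =ᶠ[𝓝 x] fun x' => a (t * x') * x' := by
    filter_upwards [((continuous_const_mul t).tendsto x).eventually hf] with x' hx'
    exact (hx'.comp t (hasDerivAt_mul_const x')).deriv
  have houter : HasDerivAt (fun x' => a (t * x') * x') (b * t * x + a (t * x) * 1) x :=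
    (ha.comp x (hasDerivAt_const_mul t)).fun_mul (hasDerivAt_id' x)
  rw [hinner.deriv_eq, houter.deriv]
  ring

theorem brownian_sheet_density_fokker_planck (y₀ : ℝ)
    (g : ℝ → ℝ → ℝ → ℝ)
    (hg : ∀ t x y, g t x y =
      (2 * Real.pi * t * x) ^ (-(1:ℝ)/2) * Real.exp (-(y - y₀) ^ 2 / (2 * t * x)))
    (t x : ℝ) (ht : 0 < t) (hx : 0 < x) (y : ℝ) :
    deriv (fun x' => deriv (fun t' => g t' x' y) t) x
      = (1 / 2) * iteratedDeriv 2 (g t x) y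
        + (t * x / 4) * iteratedDeriv 4 (g t x) y := by
  have hg_eq : ∀ t x, g t x = heatKernel y₀ (t * x) := fun t x =>
    funext fun y => by simp only [hg, heatKernel, mul_assoc]
  have hs : 0 < t * x := mul_pos ht hx
  simp only [hg_eq]
  rw [deriv_deriv_comp_mul (f := fun r => heatKernel y₀ r y)
    ((eventually_gt_nhds hs).mono fun r hr => heatKernel.hasDerivAt_variance hr)
    ((heatKernel.hasDerivAt_iteratedDeriv_two_variance hs).div_const 2)]
  ring
end

section
/- Let f, g : [0,T]×[0,X] → ℝ be continuous, and for (t,x) ∈ [0,T]×[0,X] let R_{(t,x)} denote the rectangle of integration, with ζ = (ζ₁,ζ₂), ζ' = (ζ₁',ζ₂'). Then ∂²/∂t∂x ∬_{R_{(t,x)}×R_{(t,x)}} 1_{ζ₁≤ζ₁', ζ₂≥ζ₂'} f(ζ)g(ζ') dζ dζ' = (∫₀^t f(s,x) ds)·(∫₀^x g(t,a) da). -/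
open intervalIntegral

set_option maxHeartbeats 1000000

open MeasureTheory in
private lemma swap_le (F : ℝ → ℝ → ℝ) (hF : Continuous fun p : ℝ × ℝ => F p.1 p.2)
    {a b c d : ℝ} (h1 : a ≤ b) (h2 : c ≤ d) :
    ∫ x in a..b, ∫ y in c..d, F x y = ∫ y in c..d, ∫ x in a..b, F x y := by
  have hint : Integrable (Function.uncurry F)
      ((volume.restrict (Set.Ioc a b)).prod (volume.restrict (Set.Ioc c d))) := by
    rw [Measure.prod_restrict]
    have hsub : Set.Ioc a b ×ˢ Set.Ioc c d ⊆ Set.Icc (a, c) (b, d) := by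
      rw [← Set.Icc_prod_Icc]
      exact Set.prod_mono Set.Ioc_subset_Icc_self Set.Ioc_subset_Icc_self
    have : IntegrableOn (Function.uncurry F) (Set.Icc (a, c) (b, d))
        (volume.prod volume) := by
      rw [← Measure.volume_eq_prod]
      exact hF.continuousOn.integrableOn_compact isCompact_Icc
    exact this.mono_set hsub
  simp only [intervalIntegral.integral_of_le h1, intervalIntegral.integral_of_le h2]
  exact MeasureTheory.integral_integral_swap hint

private lemma swap_gen (F : ℝ → ℝ → ℝ) (hF : Continuous fun p : ℝ × ℝ => F p.1 p.2)
    (a b c d : ℝ) :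
    ∫ x in a..b, ∫ y in c..d, F x y = ∫ y in c..d, ∫ x in a..b, F x y := by
  rcases le_total a b with h1 | h1 <;> rcases le_total c d with h2 | h2
  · exact swap_le F hF h1 h2
  · have key := swap_le F hF h1 h2
    calc ∫ x in a..b, ∫ y in c..d, F x y
        = ∫ x in a..b, -∫ y in d..c, F x y := by
          simp only [intervalIntegral.integral_symm d c]
      _ = -∫ x in a..b, ∫ y in d..c, F x y := intervalIntegral.integral_neg
      _ = -∫ y in d..c, ∫ x in a..b, F x y := by rw [key]
      _ = ∫ y in c..d, ∫ x in a..b, F x y := (intervalIntegral.integral_symm d c).symm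
  · have key := swap_le F hF h1 h2
    calc ∫ x in a..b, ∫ y in c..d, F x y
        = -∫ x in b..a, ∫ y in c..d, F x y := intervalIntegral.integral_symm b a
      _ = -∫ y in c..d, ∫ x in b..a, F x y := by rw [key]
      _ = ∫ y in c..d, -∫ x in b..a, F x y := intervalIntegral.integral_neg.symm
      _ = ∫ y in c..d, ∫ x in a..b, F x y := by
          simp only [← intervalIntegral.integral_symm b a]
  · have key := swap_le F hF h1 h2
    calc ∫ x in a..b, ∫ y in c..d, F x y
        = -∫ x in b..a, ∫ y in c..d, F x y := intervalIntegral.integral_symm b a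
      _ = -∫ x in b..a, -∫ y in d..c, F x y := by
          simp only [intervalIntegral.integral_symm d c]
      _ = -(-∫ x in b..a, ∫ y in d..c, F x y) := by rw [intervalIntegral.integral_neg]
      _ = ∫ x in b..a, ∫ y in d..c, F x y := neg_neg _
      _ = ∫ y in d..c, ∫ x in b..a, F x y := key
      _ = ∫ y in d..c, -∫ x in a..b, F x y := by
          simp only [intervalIntegral.integral_symm b a, neg_neg]
      _ = -∫ y in d..c, ∫ x in a..b, F x y := intervalIntegral.integral_neg
      _ = ∫ y in c..d, ∫ x in a..b, F x y := (intervalIntegral.integral_symm d c).symm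

/-- primitive in the first variable -/
private noncomputable def primT (f : ℝ → ℝ → ℝ) (s b : ℝ) : ℝ := ∫ u in (0:ℝ)..s, f u b

/-- primitive in the second variable -/
private noncomputable def primX (g : ℝ → ℝ → ℝ) (s b : ℝ) : ℝ := ∫ a in (0:ℝ)..b, g s a

private lemma cont_slice1 {F : ℝ → ℝ → ℝ} (h : Continuous fun p : ℝ × ℝ => F p.1 p.2)
    (b : ℝ) : Continuous fun s => F s b :=
  h.comp (continuous_id.prodMk continuous_const)

private lemma cont_slice2 {F : ℝ → ℝ → ℝ} (h : Continuous fun p : ℝ × ℝ => F p.1 p.2)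
    (s : ℝ) : Continuous fun b => F s b :=
  h.comp (continuous_const.prodMk continuous_id)

private lemma cont_swap {F : ℝ → ℝ → ℝ} (h : Continuous fun p : ℝ × ℝ => F p.1 p.2) :
    Continuous fun p : ℝ × ℝ => F p.2 p.1 :=
  h.comp (continuous_snd.prodMk continuous_fst)

private lemma cont_primT {f : ℝ → ℝ → ℝ} (hf : Continuous fun p : ℝ × ℝ => f p.1 p.2) :
    Continuous fun p : ℝ × ℝ => primT f p.1 p.2 := by
  apply intervalIntegral.continuous_parametric_intervalIntegral_of_continuous
    (f := fun (p : ℝ × ℝ) u => f u p.2) (s := fun p : ℝ × ℝ => p.1)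
  · exact hf.comp (continuous_snd.prodMk continuous_fst.snd)
  · exact continuous_fst

private lemma cont_primX {g : ℝ → ℝ → ℝ} (hg : Continuous fun p : ℝ × ℝ => g p.1 p.2) :
    Continuous fun p : ℝ × ℝ => primX g p.1 p.2 := by
  apply intervalIntegral.continuous_parametric_intervalIntegral_of_continuous
    (f := fun (p : ℝ × ℝ) a => g p.1 a) (s := fun p : ℝ × ℝ => p.2)
  · exact hg.comp (continuous_fst.fst.prodMk continuous_snd)
  · exact continuous_snd

private lemma hasDerivAt_primT {f : ℝ → ℝ → ℝ} (hf : Continuous fun p : ℝ × ℝ => f p.1 p.2)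
    (s b : ℝ) : HasDerivAt (fun u => primT f u b) (f s b) s :=
  ((cont_slice1 hf b).integral_hasStrictDerivAt 0 s).hasDerivAt

theorem mixed_deriv_indicator_double_integral_product_case
    (f g : ℝ → ℝ → ℝ) (hf : Continuous (fun p : ℝ × ℝ => f p.1 p.2))
    (hg : Continuous (fun p : ℝ × ℝ => g p.1 p.2))
    (H : ℝ → ℝ → ℝ)
    (hH : ∀ t x, H t x =
      ∫ ζ₂ in (0:ℝ)..x, ∫ ζ₁ in (0:ℝ)..t,
        (∫ ζ₂' in (0:ℝ)..ζ₂, ∫ ζ₁' in ζ₁..t, f ζ₁ ζ₂ * g ζ₁' ζ₂'))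
    (t x : ℝ) (ht : 0 ≤ t) (hx : 0 ≤ x) :
    deriv (fun x' => deriv (fun t' => H t' x') t) x
      = (∫ s in (0:ℝ)..t, f s x) * (∫ a in (0:ℝ)..x, g t a) := by
  have hGc : Continuous fun p : ℝ × ℝ => primX g p.1 p.2 := cont_primX hg
  have hFc : Continuous fun p : ℝ × ℝ => primT f p.1 p.2 := cont_primT hf
  have hKc : Continuous fun p : ℝ × ℝ => primT (primX g) p.1 p.2 := cont_primT hGc
  have hGFc : Continuous fun p : ℝ × ℝ => primX g p.1 p.2 * primT f p.1 p.2 := hGc.mul hFc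
  -- key identity
  have key : ∀ T X : ℝ, H T X
      = ∫ s in (0:ℝ)..T, ∫ b in (0:ℝ)..X, primX g s b * primT f s b := by
    intro T X
    rw [hH T X]
    have stepA : ∀ ζ₁ ζ₂ : ℝ,
        (∫ ζ₂' in (0:ℝ)..ζ₂, ∫ ζ₁' in ζ₁..T, f ζ₁ ζ₂ * g ζ₁' ζ₂')
          = f ζ₁ ζ₂ * (primT (primX g) T ζ₂ - primT (primX g) ζ₁ ζ₂) := by
      intro ζ₁ ζ₂
      have h1 : ∀ ζ₂' : ℝ, (∫ ζ₁' in ζ₁..T, f ζ₁ ζ₂ * g ζ₁' ζ₂')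
          = f ζ₁ ζ₂ * ∫ ζ₁' in ζ₁..T, g ζ₁' ζ₂' := fun ζ₂' =>
        intervalIntegral.integral_const_mul _ _
      simp only [h1]
      rw [intervalIntegral.integral_const_mul]
      congr 1
      rw [swap_gen (fun ζ₂' ζ₁' => g ζ₁' ζ₂') (cont_swap hg) 0 ζ₂ ζ₁ T]
      have h2 : ∀ ζ₁' : ℝ, (∫ ζ₂' in (0:ℝ)..ζ₂, g ζ₁' ζ₂') = primX g ζ₁' ζ₂ := fun _ => rfl
      simp only [h2]
      have h3 : (∫ ζ₁' in (0:ℝ)..T, primX g ζ₁' ζ₂) - ∫ ζ₁' in (0:ℝ)..ζ₁, primX g ζ₁' ζ₂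
          = ∫ ζ₁' in ζ₁..T, primX g ζ₁' ζ₂ :=
        intervalIntegral.integral_interval_sub_left
          ((cont_slice1 hGc ζ₂).intervalIntegrable 0 T)
          ((cont_slice1 hGc ζ₂).intervalIntegrable 0 ζ₁)
      rw [← h3]; rfl
    simp only [stepA]
    have stepB : ∀ b : ℝ,
        (∫ ζ₁ in (0:ℝ)..T, f ζ₁ b * (primT (primX g) T b - primT (primX g) ζ₁ b))
          = ∫ s in (0:ℝ)..T, primX g s b * primT f s b := by
      intro b
      have hmulsub : ∀ ζ : ℝ, f ζ b * (primT (primX g) T b - primT (primX g) ζ b)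
          = f ζ b * primT (primX g) T b - f ζ b * primT (primX g) ζ b := fun ζ =>
        mul_sub _ _ _
      simp only [hmulsub]
      rw [intervalIntegral.integral_sub (f := fun ζ => f ζ b * primT (primX g) T b)
          (g := fun ζ => f ζ b * primT (primX g) ζ b)
        (((cont_slice1 hf b).mul continuous_const).intervalIntegrable 0 T)
        (((cont_slice1 hf b).mul (cont_slice1 hKc b)).intervalIntegrable 0 T)]
      rw [intervalIntegral.integral_mul_const]
      have hu : ∀ s ∈ Set.uIcc (0:ℝ) T,
          HasDerivAt (fun u => primT (primX g) u b) (primX g s b) s := fun s _ =>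
        hasDerivAt_primT hGc s b
      have hv : ∀ s ∈ Set.uIcc (0:ℝ) T,
          HasDerivAt (fun u => primT f u b) (f s b) s := fun s _ =>
        hasDerivAt_primT hf s b
      have parts := intervalIntegral.integral_mul_deriv_eq_deriv_mul hu hv
        ((cont_slice1 hGc b).intervalIntegrable 0 T)
        ((cont_slice1 hf b).intervalIntegrable 0 T)
      have hK0 : primT (primX g) 0 b = 0 := intervalIntegral.integral_same
      have hF0 : primT f 0 b = 0 := intervalIntegral.integral_same
      rw [hK0, hF0] at parts
      have hcomm : ∀ s : ℝ, f s b * primT (primX g) s b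
          = primT (primX g) s b * f s b := fun s => mul_comm _ _
      simp only [hcomm]
      have hPT : (∫ u in (0:ℝ)..T, f u b) = primT f T b := rfl
      rw [parts, hPT]
      ring
    simp only [stepB]
    exact swap_gen (fun b s => primX g s b * primT f s b)
      (cont_swap (F := fun s b => primX g s b * primT f s b) hGFc) 0 X 0 T
  -- differentiate
  have d1 : ∀ x', deriv (fun t' => H t' x') t
      = ∫ b in (0:ℝ)..x', primX g t b * primT f t b := by
    intro x'
    have hΨc : Continuous fun s : ℝ => ∫ b in (0:ℝ)..x', primX g s b * primT f s b :=
      intervalIntegral.continuous_parametric_intervalIntegral_of_continuous'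
        (f := fun s b => primX g s b * primT f s b) hGFc 0 x'
    have heq : (fun t' => H t' x')
        = fun t' => ∫ s in (0:ℝ)..t', ∫ b in (0:ℝ)..x', primX g s b * primT f s b := by
      funext t'; exact key t' x'
    rw [heq]
    exact Continuous.deriv_integral _ hΨc 0 t
  have hfun : (fun x' => deriv (fun t' => H t' x') t)
      = fun x' => ∫ b in (0:ℝ)..x', primX g t b * primT f t b := by
    funext x'; exact d1 x'
  rw [hfun]
  have hcont : Continuous fun b => primX g t b * primT f t b :=
    cont_slice2 (F := fun s b => primX g s b * primT f s b) hGFc t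
  rw [Continuous.deriv_integral (fun b => primX g t b * primT f t b) hcont 0 x]
  exact mul_comm _ _
end
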